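/- arXiv:1306.5311 — 2 statements merged into one kernel-verified Lean document; each statement's English description precedes it below -/
import Mathlib

section
/- Exact expression for the scaled TLS estimation error: Let X ∈ ℝ^{n×p}, Y ∈ ℝ^n, λ ∈ ℝ, β, β̂ ∈ ℝ^p, and suppose [β̂ᵀ, −1]ᵀ is an eigenvector of [X,Y]ᵀ[X,Y] with eigenvalue λ. Set Δ_n := n^{−1}(XᵀX − λI) and M := [I, β][I, β̂]ᵀ = I + β β̂ᵀ ∈ ℝ^{p×p}, and assume Δ_n and M are invertible. Then √n (β̂ − β) = −Δ_n^{−1} M^{−1} [I, β] ( n^{−1/2} [X,Y]ᵀ[X,Y] ) [βᵀ, −1]ᵀ; moreover, if in addition [I, β] · E([X,Y]ᵀ[X,Y]) · [βᵀ, −1]ᵀ = 0, then √n (β̂ − β) = −Δ_n^{−1} M^{−1} [I, β] ( n^{−1/2} { [X,Y]ᵀ[X,Y] − E([X,Y]ᵀ[X,Y]) } ) [βᵀ, −1]ᵀ. -/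
open Matrix

namespace Stmt11

/-- `appendCol X Y` is the `n × (p+1)` matrix `[X, Y]` obtained by appending the
column `Y` to the matrix `X`. -/
def appendCol {n p : ℕ} (X : Matrix (Fin n) (Fin p) ℝ) (Y : Fin n → ℝ) :
    Matrix (Fin n) (Fin (p + 1)) ℝ :=
  Matrix.of fun i => Fin.snoc (X i) (Y i)

/-- The `p × (p+1)` matrix `[I, b]` appending the column `b` to the identity. -/
def idAppend {p : ℕ} (b : Fin p → ℝ) : Matrix (Fin p) (Fin (p + 1)) ℝ :=
  appendCol (1 : Matrix (Fin p) (Fin p) ℝ) b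

/-- The vector `[βᵀ, −1]ᵀ ∈ ℝ^{p+1}`. -/
def augNegOne {p : ℕ} (β : Fin p → ℝ) : Fin (p + 1) → ℝ := Fin.snoc β (-1)


/-!
With `G = [X,Y]ᵀ[X,Y]`, `d = β - β̂` and `[βᵀ,-1]ᵀ = [β̂ᵀ,-1]ᵀ + [dᵀ,0]ᵀ`, the eigenvector equation
gives `[I,β] G [βᵀ,-1]ᵀ = λ(β̂ - β) + XᵀX d + (Yᵀ X d) β`. Its first `p` rows are the normal
equations `XᵀY = (XᵀX - λI) β̂`, which by symmetry of `XᵀX - λI` turn `Yᵀ X d` into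
`β̂ᵀ (XᵀX - λI) d`; hence `[I,β] G [βᵀ,-1]ᵀ = M (XᵀX - λI) d` and it remains to invert `M` and `Δ_n`.
The second expression follows because `[I,β] E(G) [βᵀ,-1]ᵀ = 0`.
-/

section

variable {n p : ℕ}

lemma appendCol_mulVec_snoc (X : Matrix (Fin n) (Fin p) ℝ) (Y : Fin n → ℝ)
    (w : Fin p → ℝ) (c : ℝ) :
    appendCol X Y *ᵥ Fin.snoc w c = X *ᵥ w + c • Y := by
  ext i
  simp [appendCol, mulVec, dotProduct, Fin.sum_univ_castSucc, mul_comm]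

lemma idAppend_mulVec_snoc (b w : Fin p → ℝ) (c : ℝ) :
    idAppend b *ᵥ Fin.snoc w c = w + c • b := by
  simpa [idAppend] using appendCol_mulVec_snoc 1 b w c

lemma idAppend_mul_transpose_appendCol (b : Fin p → ℝ) (X : Matrix (Fin n) (Fin p) ℝ)
    (Y : Fin n → ℝ) :
    idAppend b * (appendCol X Y)ᵀ = Xᵀ + vecMulVec b Y := by
  ext i j
  simp [idAppend, appendCol, mul_apply, Fin.sum_univ_castSucc, vecMulVec, one_apply]

lemma idAppend_mul_transpose_idAppend (β βh : Fin p → ℝ) :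
    idAppend β * (idAppend βh)ᵀ = 1 + vecMulVec β βh :=
  (idAppend_mul_transpose_appendCol β 1 βh).trans (by rw [transpose_one])

lemma idAppend_mulVec_transpose_appendCol_mulVec (b : Fin p → ℝ)
    (X : Matrix (Fin n) (Fin p) ℝ) (Y u : Fin n → ℝ) :
    idAppend b *ᵥ ((appendCol X Y)ᵀ *ᵥ u) = Xᵀ *ᵥ u + (Y ⬝ᵥ u) • b := by
  rw [mulVec_mulVec, idAppend_mul_transpose_appendCol, add_mulVec, vecMulVec_mulVec,
    op_smul_eq_smul]

lemma transpose_mulVec_eq_of_mulVec_augNegOne (X : Matrix (Fin n) (Fin p) ℝ)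
    (Y : Fin n → ℝ) (lam : ℝ) (βh : Fin p → ℝ)
    (heig : ((appendCol X Y)ᵀ * appendCol X Y) *ᵥ augNegOne βh = lam • augNegOne βh) :
    Xᵀ *ᵥ Y = (Xᵀ * X - lam • 1) *ᵥ βh := by
  -- `[I, 0]` extracts the first `p` rows of the eigenvector equation
  have h := congrArg (idAppend 0 *ᵥ ·) heig
  simp only [← mulVec_mulVec, mulVec_smul, augNegOne, appendCol_mulVec_snoc,
    idAppend_mulVec_transpose_appendCol_mulVec, idAppend_mulVec_snoc] at h
  simp only [smul_zero, add_zero, mulVec_add, mulVec_smul] at h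
  rw [sub_mulVec, ← mulVec_mulVec, smul_mulVec, one_mulVec, ← h]
  module

lemma idAppend_mulVec_gram_mulVec_augNegOne (X : Matrix (Fin n) (Fin p) ℝ) (Y : Fin n → ℝ)
    (lam : ℝ) (β βh : Fin p → ℝ)
    (heig : ((appendCol X Y)ᵀ * appendCol X Y) *ᵥ augNegOne βh = lam • augNegOne βh) :
    idAppend β *ᵥ (((appendCol X Y)ᵀ * appendCol X Y) *ᵥ augNegOne β) =
      ((1 + vecMulVec β βh) * (Xᵀ * X - lam • 1)) *ᵥ (β - βh) := by
  set D : Matrix (Fin p) (Fin p) ℝ := Xᵀ * X - lam • 1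
  have hsplit : augNegOne β = augNegOne βh + Fin.snoc (β - βh) 0 := by
    ext j
    refine Fin.lastCases ?_ ?_ j <;> simp [augNegOne]
  have hD_symm : Dᵀ = D := by simp [D, transpose_sub]
  have hscalar : Y ⬝ᵥ X *ᵥ (β - βh) = βh ⬝ᵥ D *ᵥ (β - βh) := by
    rw [dotProduct_mulVec, ← mulVec_transpose,
      transpose_mulVec_eq_of_mulVec_augNegOne X Y lam βh heig, dotProduct_mulVec βh,
      ← mulVec_transpose, hD_symm]
  rw [hsplit, mulVec_add, heig, mulVec_add, mulVec_smul, augNegOne, idAppend_mulVec_snoc,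
    ← mulVec_mulVec, appendCol_mulVec_snoc, zero_smul, add_zero,
    idAppend_mulVec_transpose_appendCol_mulVec, hscalar, add_mul, one_mul, add_mulVec,
    ← mulVec_mulVec (M := vecMulVec β βh), vecMulVec_mulVec, op_smul_eq_smul]
  simp only [D, sub_mulVec, ← mulVec_mulVec, smul_mulVec, one_mulVec]
  module

end

lemma smul_inv_mul_inv_mulVec_mul_mulVec {ι K : Type*} [Fintype ι] [DecidableEq ι] [Field K]
    {c : K} (hc : c ≠ 0) {D M : Matrix ι ι K} (hD : IsUnit (c⁻¹ • D).det) (hM : IsUnit M.det)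
    (d : ι → K) :
    ((c⁻¹ • D)⁻¹ * M⁻¹) *ᵥ ((M * D) *ᵥ d) = c • d := by
  have hD_eq : (c⁻¹ • D)⁻¹ * D = c • 1 := by
    rw [← nonsing_inv_mul _ hD, ← Matrix.mul_smul, smul_smul, mul_inv_cancel₀ hc, one_smul]
  rw [mulVec_mulVec, Matrix.mul_assoc, ← Matrix.mul_assoc M⁻¹, nonsing_inv_mul _ hM,
    Matrix.one_mul, hD_eq, smul_mulVec, one_mulVec]

/-- **Exact expression for the scaled TLS estimation error.**
If `[β̂ᵀ, −1]ᵀ` is an eigenvector of `G := [X,Y]ᵀ[X,Y]` with eigenvalue `λ`, and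
`Δ_n := n⁻¹(XᵀX − λI)` and `M := [I,β][I,β̂]ᵀ = I + β β̂ᵀ` are invertible, then
`√n (β̂ − β) = −Δ_n⁻¹ M⁻¹ [I,β] (n^{−1/2} G) [βᵀ, −1]ᵀ`; and moreover, for any
matrix `EG` (the expectation of `G`) satisfying `[I,β]·EG·[βᵀ,−1]ᵀ = 0`,
`√n (β̂ − β) = −Δ_n⁻¹ M⁻¹ [I,β] (n^{−1/2} (G − EG)) [βᵀ, −1]ᵀ`. -/
theorem tls_error_expression {n p : ℕ}
    (X : Matrix (Fin n) (Fin p) ℝ) (Y : Fin n → ℝ) (lam : ℝ) (β βh : Fin p → ℝ)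
    (heig : ((appendCol X Y)ᵀ * appendCol X Y).mulVec (augNegOne βh) = lam • augNegOne βh)
    (hΔ : IsUnit (((n : ℝ)⁻¹ • (Xᵀ * X - lam • (1 : Matrix (Fin p) (Fin p) ℝ))).det))
    (hM : IsUnit ((idAppend β * (idAppend βh)ᵀ).det)) :
    idAppend β * (idAppend βh)ᵀ = 1 + Matrix.vecMulVec β βh ∧
    Real.sqrt n • (βh - β) =
      -((((n : ℝ)⁻¹ • (Xᵀ * X - lam • (1 : Matrix (Fin p) (Fin p) ℝ)))⁻¹ *
            (idAppend β * (idAppend βh)ᵀ)⁻¹ * idAppend β).mulVec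
          ((Real.sqrt n)⁻¹ • (((appendCol X Y)ᵀ * appendCol X Y).mulVec (augNegOne β)))) ∧
    ∀ EG : Matrix (Fin (p + 1)) (Fin (p + 1)) ℝ,
      (idAppend β).mulVec (EG.mulVec (augNegOne β)) = 0 →
      Real.sqrt n • (βh - β) =
        -((((n : ℝ)⁻¹ • (Xᵀ * X - lam • (1 : Matrix (Fin p) (Fin p) ℝ)))⁻¹ *
              (idAppend β * (idAppend βh)ᵀ)⁻¹ * idAppend β).mulVec
            ((Real.sqrt n)⁻¹ •
              ((((appendCol X Y)ᵀ * appendCol X Y) - EG).mulVec (augNegOne β)))) := by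
  have hMeq := idAppend_mul_transpose_idAppend β βh
  have hmain : Real.sqrt n • (βh - β) =
      -((((n : ℝ)⁻¹ • (Xᵀ * X - lam • (1 : Matrix (Fin p) (Fin p) ℝ)))⁻¹ *
            (idAppend β * (idAppend βh)ᵀ)⁻¹ * idAppend β) *ᵥ
          ((Real.sqrt n)⁻¹ • (((appendCol X Y)ᵀ * appendCol X Y) *ᵥ augNegOne β))) := by
    rcases eq_or_ne n 0 with rfl | hn
    · -- both sides vanish, the right one because `(√0)⁻¹ = 0` in Lean
      simp
    rw [mulVec_smul, ← mulVec_mulVec (N := idAppend β),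
      idAppend_mulVec_gram_mulVec_augNegOne X Y lam β βh heig, ← hMeq,
      smul_inv_mul_inv_mulVec_mul_mulVec (Nat.cast_ne_zero.2 hn) hΔ hM, smul_smul,
      inv_mul_eq_div, Real.div_sqrt, ← smul_neg, neg_sub]
  refine ⟨hMeq, hmain, fun EG hEG => ?_⟩
  rw [hmain, sub_mulVec, smul_sub (Real.sqrt n)⁻¹, mulVec_sub,
    mulVec_smul (v := EG *ᵥ augNegOne β),
    ← mulVec_mulVec (N := idAppend β) (v := EG *ᵥ augNegOne β), hEG, mulVec_zero, smul_zero,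
    sub_zero]

end Stmt11
end

section
/- Variance of the linearized TLS statistic converges to a positive quadratic form: In the EIV model, for t ∈ ℝ^{p+1}, t ≠ 0, define ρ_i := tᵀ( [Z, Zβ]_{i,·}ᵀ [Θ, ε]_{i,·} + [Θ, ε]_{i,·}ᵀ [Θ, ε]_{i,·} − σ² I_{p+1} ) [βᵀ, −1]ᵀ for i = 1,…,n. Then n^{−1} E( Σ_{i=1}^n ρ_i )² = tᵀ { n^{−1} Var( [X,Y]ᵀ[X,Y] [βᵀ, −1]ᵀ ) } t; in particular, if n^{−1} Var( [X,Y]ᵀ[X,Y] [βᵀ, −1]ᵀ ) → ℶ for a positive definite (p+1)×(p+1) matrix ℶ, then n^{−1} E( Σ_{i=1}^n ρ_i )² → tᵀ ℶ t > 0 as n → ∞. -/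
/-!
Write `b = [βᵀ, −1]ᵀ`, `d_i`, `e_i` for the rows of `[Z, Zβ]` and `[Θ, ε]`, and
`r_i = d_i + e_i`. Since `d_i ⬝ b = 0`, we get `r_i ⬝ b = e_i ⬝ b`, hence
`V_n = Σ_i (e_i ⬝ b) r_i` and `ρ_i = tᵀ((e_i ⬝ b) r_i − σ² b)`. The errors being centred and
isotropic, `E V_n = n σ² b`, so `Σ_i ρ_i = tᵀ(V_n − E V_n)`, whose second moment is
`tᵀ Var(V_n) t`. The limit follows by continuity of `M ↦ tᵀ M t`.
-/

open Matrix MeasureTheory Filter Topology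

namespace Stmt14

variable {Ω : Type*}

/-- The vector `[βᵀ, −1]ᵀ ∈ ℝ^{p+1}`. -/
def augNegOne {p : ℕ} (β : Fin p → ℝ) : Fin (p + 1) → ℝ := Fin.snoc β (-1)

/-- The `i`-th row `[Θ_{i,·}, ε_i]` of the error matrix. -/
def errRow {p : ℕ} (Θ : ℕ → Fin p → Ω → ℝ) (ε : ℕ → Ω → ℝ) (i : ℕ) (ω : Ω) :
    Fin (p + 1) → ℝ :=
  Fin.snoc (fun j => Θ i j ω) (ε i ω)

/-- The `i`-th row `[X_{i,·}, Y_i] = [Z_{i,·} + Θ_{i,·}, Z_{i,·}β + ε_i]` of the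
observed data matrix `[X, Y]`. -/
def dataRow {p : ℕ} (Z : ℕ → Fin p → ℝ) (β : Fin p → ℝ)
    (Θ : ℕ → Fin p → Ω → ℝ) (ε : ℕ → Ω → ℝ) (i : ℕ) (ω : Ω) : Fin (p + 1) → ℝ :=
  Fin.snoc (fun j => Z i j + Θ i j ω) (Z i ⬝ᵥ β + ε i ω)

/-- The `i`-th row `[Z_{i,·}, Z_{i,·}β]` of the design matrix `[Z, Zβ]`. -/
def designRow {p : ℕ} (Z : ℕ → Fin p → ℝ) (β : Fin p → ℝ) (i : ℕ) : Fin (p + 1) → ℝ :=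
  Fin.snoc (Z i) (Z i ⬝ᵥ β)

/-- The Gram matrix `[X,Y]ᵀ[X,Y] = Σ_{i<n} r_i r_iᵀ` of the first `n` observations. -/
noncomputable def gram {p : ℕ} (Z : ℕ → Fin p → ℝ) (β : Fin p → ℝ)
    (Θ : ℕ → Fin p → Ω → ℝ) (ε : ℕ → Ω → ℝ) (n : ℕ) (ω : Ω) :
    Matrix (Fin (p + 1)) (Fin (p + 1)) ℝ :=
  ∑ i ∈ Finset.range n, Matrix.vecMulVec (dataRow Z β Θ ε i ω) (dataRow Z β Θ ε i ω)

/-- The random vector `V_n := [X,Y]ᵀ[X,Y] [βᵀ, −1]ᵀ`. -/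
noncomputable def gramVec {p : ℕ} (Z : ℕ → Fin p → ℝ) (β : Fin p → ℝ)
    (Θ : ℕ → Fin p → Ω → ℝ) (ε : ℕ → Ω → ℝ) (n : ℕ) (ω : Ω) : Fin (p + 1) → ℝ :=
  (gram Z β Θ ε n ω).mulVec (augNegOne β)

/-- The covariance matrix `Var(V_n) = E[(V_n − E V_n)(V_n − E V_n)ᵀ]`. -/
noncomputable def covGram {p : ℕ} [MeasurableSpace Ω] (μ : Measure Ω)
    (Z : ℕ → Fin p → ℝ) (β : Fin p → ℝ) (Θ : ℕ → Fin p → Ω → ℝ) (ε : ℕ → Ω → ℝ)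
    (n : ℕ) : Matrix (Fin (p + 1)) (Fin (p + 1)) ℝ :=
  Matrix.of fun a b => ∫ ω,
    (gramVec Z β Θ ε n ω a - ∫ ω', gramVec Z β Θ ε n ω' a ∂μ) *
    (gramVec Z β Θ ε n ω b - ∫ ω', gramVec Z β Θ ε n ω' b ∂μ) ∂μ

/-- `ρ_i := tᵀ( [Z,Zβ]_{i,·}ᵀ [Θ,ε]_{i,·} + [Θ,ε]_{i,·}ᵀ [Θ,ε]_{i,·} − σ² I ) [βᵀ,−1]ᵀ`. -/
noncomputable def rho {p : ℕ} (Z : ℕ → Fin p → ℝ) (β : Fin p → ℝ)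
    (Θ : ℕ → Fin p → Ω → ℝ) (ε : ℕ → Ω → ℝ) (σ2 : ℝ) (t : Fin (p + 1) → ℝ)
    (i : ℕ) (ω : Ω) : ℝ :=
  t ⬝ᵥ ((Matrix.vecMulVec (designRow Z β i) (errRow Θ ε i ω) +
      Matrix.vecMulVec (errRow Θ ε i ω) (errRow Θ ε i ω) -
      σ2 • (1 : Matrix (Fin (p + 1)) (Fin (p + 1)) ℝ)).mulVec (augNegOne β))

section RandomVector

open ProbabilityTheory

variable [MeasurableSpace Ω] {μ : Measure Ω} {ι : Type*} [Fintype ι]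

noncomputable def covMatrix (μ : Measure Ω) (V : Ω → ι → ℝ) : Matrix ι ι ℝ :=
  Matrix.of fun a b => cov[fun ω => V ω a, fun ω => V ω b; μ]

lemma integral_dotProduct {V : Ω → ι → ℝ} (hV : ∀ a, Integrable (fun ω => V ω a) μ)
    (t : ι → ℝ) : ∫ ω, t ⬝ᵥ V ω ∂μ = t ⬝ᵥ fun a => ∫ ω, V ω a ∂μ := by
  simp only [dotProduct]
  rw [integral_finsetSum _ fun a _ => (hV a).const_mul (t a)]
  simp only [integral_const_mul]

lemma variance_dotProduct [IsFiniteMeasure μ] {V : Ω → ι → ℝ}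
    (hV : ∀ a, MemLp (fun ω => V ω a) 2 μ) (t : ι → ℝ) :
    Var[fun ω => t ⬝ᵥ V ω; μ] = t ⬝ᵥ covMatrix μ V *ᵥ t := by
  simp only [dotProduct]
  rw [variance_fun_sum fun a => (hV a).const_mul (t a)]
  simp only [covariance_const_mul_left, covariance_const_mul_right, mulVec, dotProduct,
    covMatrix, of_apply, Finset.mul_sum]
  exact Finset.sum_congr rfl fun a _ => Finset.sum_congr rfl fun b _ => by ring

lemma integral_sq_dotProduct_sub_integral [IsFiniteMeasure μ] {V : Ω → ι → ℝ}
    (hV : ∀ a, MemLp (fun ω => V ω a) 2 μ) (t : ι → ℝ) :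
    ∫ ω, (t ⬝ᵥ (V ω - fun a => ∫ ω', V ω' a ∂μ)) ^ 2 ∂μ = t ⬝ᵥ covMatrix μ V *ᵥ t := by
  have hmeas : AEMeasurable (fun ω => t ⬝ᵥ V ω) μ :=
    Finset.aemeasurable_fun_sum _ fun a _ => ((hV a).aemeasurable.const_mul (t a))
  rw [← variance_dotProduct hV, variance_eq_integral hmeas,
    integral_dotProduct fun a => (hV a).integrable one_le_two]
  simp only [dotProduct_sub]

variable {e : Ω → ι → ℝ}

lemma integrable_dotProduct (he : ∀ a, Integrable (fun ω => e ω a) μ) (u : ι → ℝ) :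
    Integrable (fun ω => e ω ⬝ᵥ u) μ :=
  integrable_finsetSum _ fun a _ => (he a).mul_const (u a)

lemma integrable_dotProduct_mul (he2 : ∀ a b, Integrable (fun ω => e ω a * e ω b) μ)
    (u : ι → ℝ) (c : ι) : Integrable (fun ω => (e ω ⬝ᵥ u) * e ω c) μ := by
  simp only [dotProduct, Finset.sum_mul]
  exact integrable_finsetSum _ fun a _ => by
    simpa only [mul_right_comm] using (he2 a c).mul_const (u a)

lemma integrable_dotProduct_mul_add (he : ∀ a, Integrable (fun ω => e ω a) μ)
    (he2 : ∀ a b, Integrable (fun ω => e ω a * e ω b) μ) (u d : ι → ℝ) (c : ι) :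
    Integrable (fun ω => (e ω ⬝ᵥ u) * (d c + e ω c)) μ := by
  simp only [mul_add]
  exact ((integrable_dotProduct he u).mul_const (d c)).add (integrable_dotProduct_mul he2 u c)

lemma integral_dotProduct_mul_add [DecidableEq ι] {σ2 : ℝ}
    (he : ∀ a, Integrable (fun ω => e ω a) μ) (hmean : ∀ a, ∫ ω, e ω a ∂μ = 0)
    (he2 : ∀ a b, Integrable (fun ω => e ω a * e ω b) μ)
    (hcov : ∀ a b, ∫ ω, e ω a * e ω b ∂μ = if a = b then σ2 else 0) (u d : ι → ℝ) (c : ι) :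
    ∫ ω, (e ω ⬝ᵥ u) * (d c + e ω c) ∂μ = σ2 * u c := by
  have hfirst : ∫ ω, e ω ⬝ᵥ u ∂μ = 0 := by
    simp_rw [dotProduct_comm _ u]
    simp [integral_dotProduct he, hmean]
  have hsecond : ∫ ω, (e ω ⬝ᵥ u) * e ω c ∂μ = σ2 * u c := by
    simp only [dotProduct, Finset.sum_mul]
    rw [integral_finsetSum _ fun a _ => by
      simpa only [mul_right_comm] using (he2 a c).mul_const (u a)]
    simp_rw [mul_right_comm (e _ _) (u _) (e _ _), integral_mul_const, hcov, ite_mul, zero_mul]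
    simp
  simp only [mul_add]
  rw [integral_add ((integrable_dotProduct he u).mul_const (d c))
    (integrable_dotProduct_mul he2 u c), integral_mul_const, hfirst, zero_mul, zero_add,
    hsecond]

end RandomVector

section EIV

variable {p : ℕ} (Z : ℕ → Fin p → ℝ) (β : Fin p → ℝ) (Θ : ℕ → Fin p → Ω → ℝ)
  (ε : ℕ → Ω → ℝ)

lemma designRow_dotProduct_augNegOne (i : ℕ) : designRow Z β i ⬝ᵥ augNegOne β = 0 := by
  simp [designRow, augNegOne, dotProduct, Fin.sum_univ_castSucc]

lemma dataRow_eq_designRow_add_errRow (i : ℕ) (ω : Ω) :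
    dataRow Z β Θ ε i ω = designRow Z β i + errRow Θ ε i ω := by
  ext a
  induction a using Fin.lastCases <;> simp [dataRow, designRow, errRow]

lemma dataRow_dotProduct_augNegOne (i : ℕ) (ω : Ω) :
    dataRow Z β Θ ε i ω ⬝ᵥ augNegOne β = errRow Θ ε i ω ⬝ᵥ augNegOne β := by
  rw [dataRow_eq_designRow_add_errRow, add_dotProduct, designRow_dotProduct_augNegOne,
    zero_add]

lemma gramVec_eq_sum (n : ℕ) (ω : Ω) :
    gramVec Z β Θ ε n ω =
      ∑ i ∈ Finset.range n, (errRow Θ ε i ω ⬝ᵥ augNegOne β) • dataRow Z β Θ ε i ω := by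
  simp only [gramVec, gram, sum_mulVec, vecMulVec_mulVec, op_smul_eq_smul,
    dataRow_dotProduct_augNegOne]

lemma rho_eq (σ2 : ℝ) (t : Fin (p + 1) → ℝ) (i : ℕ) (ω : Ω) :
    rho Z β Θ ε σ2 t i ω =
      t ⬝ᵥ ((errRow Θ ε i ω ⬝ᵥ augNegOne β) • dataRow Z β Θ ε i ω - σ2 • augNegOne β) := by
  rw [rho, sub_mulVec, add_mulVec, vecMulVec_mulVec, vecMulVec_mulVec, smul_mulVec,
    one_mulVec, dataRow_eq_designRow_add_errRow, smul_add]
  simp only [op_smul_eq_smul]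

lemma sum_rho_eq (σ2 : ℝ) (t : Fin (p + 1) → ℝ) (n : ℕ) (ω : Ω) :
    ∑ i ∈ Finset.range n, rho Z β Θ ε σ2 t i ω =
      t ⬝ᵥ (gramVec Z β Θ ε n ω - (n * σ2) • augNegOne β) := by
  simp only [rho_eq, ← dotProduct_sum, Finset.sum_sub_distrib, Finset.sum_const,
    Finset.card_range, gramVec_eq_sum, ← Nat.cast_smul_eq_nsmul ℝ, smul_smul]

lemma integral_gramVec [MeasurableSpace Ω] {μ : Measure Ω} {σ2 : ℝ}
    (hint1 : ∀ i a, Integrable (fun ω => errRow Θ ε i ω a) μ)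
    (hmean : ∀ i a, ∫ ω, errRow Θ ε i ω a ∂μ = 0)
    (hint2 : ∀ i a b, Integrable (fun ω => errRow Θ ε i ω a * errRow Θ ε i ω b) μ)
    (hcov : ∀ i a b, ∫ ω, errRow Θ ε i ω a * errRow Θ ε i ω b ∂μ =
      if a = b then σ2 else 0) (n : ℕ) :
    (fun a => ∫ ω, gramVec Z β Θ ε n ω a ∂μ) = (n * σ2) • augNegOne β := by
  ext c
  simp only [gramVec_eq_sum, dataRow_eq_designRow_add_errRow, Finset.sum_apply,
    Pi.smul_apply, Pi.add_apply, smul_eq_mul]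
  rw [integral_finsetSum _ fun i _ =>
    integrable_dotProduct_mul_add (hint1 i) (hint2 i) (augNegOne β) (designRow Z β i) c]
  simp [integral_dotProduct_mul_add (hint1 _) (hmean _) (hint2 _) (hcov _), mul_assoc]

lemma covGram_eq_covMatrix [MeasurableSpace Ω] (μ : Measure Ω) (n : ℕ) :
    covGram μ Z β Θ ε n = covMatrix μ (gramVec Z β Θ ε n) :=
  rfl

end EIV

theorem rho_variance_quadratic_form_general {p : ℕ} [MeasurableSpace Ω]
    (μ : Measure Ω) [IsProbabilityMeasure μ]
    (Z : ℕ → Fin p → ℝ) (β : Fin p → ℝ)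
    (Θ : ℕ → Fin p → Ω → ℝ) (ε : ℕ → Ω → ℝ)
    (σ2 : ℝ)
    (hint1 : ∀ i a, Integrable (fun ω => errRow Θ ε i ω a) μ)
    (hmean : ∀ i a, ∫ ω, errRow Θ ε i ω a ∂μ = 0)
    (hint2 : ∀ i a b, Integrable (fun ω => errRow Θ ε i ω a * errRow Θ ε i ω b) μ)
    (hcov : ∀ i a b, ∫ ω, errRow Θ ε i ω a * errRow Θ ε i ω b ∂μ =
      if a = b then σ2 else 0)
    (hintV : ∀ n a, Integrable (fun ω => gramVec Z β Θ ε n ω a) μ)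
    (hintVV : ∀ n a b, Integrable (fun ω => gramVec Z β Θ ε n ω a * gramVec Z β Θ ε n ω b) μ)
    (t : Fin (p + 1) → ℝ) (ht : t ≠ 0) :
    (∀ n : ℕ,
      (∫ ω, (∑ i ∈ Finset.range n, rho Z β Θ ε σ2 t i ω) ^ 2 ∂μ) / n =
        t ⬝ᵥ ((n : ℝ)⁻¹ • covGram μ Z β Θ ε n).mulVec t) ∧
    (∀ B : Matrix (Fin (p + 1)) (Fin (p + 1)) ℝ, B.PosDef →
      Tendsto (fun n : ℕ => (n : ℝ)⁻¹ • covGram μ Z β Θ ε n) atTop (𝓝 B) →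
      Tendsto (fun n : ℕ => (∫ ω, (∑ i ∈ Finset.range n, rho Z β Θ ε σ2 t i ω) ^ 2 ∂μ) / n)
          atTop (𝓝 (t ⬝ᵥ B.mulVec t)) ∧
        0 < t ⬝ᵥ B.mulVec t) := by
  have hL2 (n : ℕ) (a : Fin (p + 1)) : MemLp (fun ω => gramVec Z β Θ ε n ω a) 2 μ :=
    (memLp_two_iff_integrable_sq (hintV n a).aestronglyMeasurable).2 (by
      simpa only [sq] using hintVV n a a)
  have hquad (n : ℕ) : (∫ ω, (∑ i ∈ Finset.range n, rho Z β Θ ε σ2 t i ω) ^ 2 ∂μ) / n =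
      t ⬝ᵥ ((n : ℝ)⁻¹ • covGram μ Z β Θ ε n).mulVec t := by
    simp only [sum_rho_eq, ← integral_gramVec Z β Θ ε hint1 hmean hint2 hcov n]
    rw [integral_sq_dotProduct_sub_integral (hL2 n), covGram_eq_covMatrix, smul_mulVec,
      dotProduct_smul, smul_eq_mul, div_eq_inv_mul]
  refine ⟨hquad, fun B hB hlim => ⟨?_, by simpa using hB.dotProduct_mulVec_pos ht⟩⟩
  simp only [hquad]
  exact ((continuous_const.dotProduct (continuous_id.matrix_mulVec continuous_const)).tendsto
    B).comp hlim

/-- **Variance of the linearized TLS statistic converges to a positive quadratic form.**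
In the EIV model, for `t ≠ 0`,
`n⁻¹ E(Σ_{i<n} ρ_i)² = tᵀ (n⁻¹ Var([X,Y]ᵀ[X,Y][βᵀ,−1]ᵀ)) t` for every `n`; and if
`n⁻¹ Var([X,Y]ᵀ[X,Y][βᵀ,−1]ᵀ) → ℶ` with `ℶ` positive definite, then
`n⁻¹ E(Σ_{i<n} ρ_i)² → tᵀ ℶ t > 0`. -/
theorem rho_variance_quadratic_form {p : ℕ} [MeasurableSpace Ω]
    (μ : Measure Ω) [IsProbabilityMeasure μ]
    (Z : ℕ → Fin p → ℝ) (β : Fin p → ℝ)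
    (Θ : ℕ → Fin p → Ω → ℝ) (ε : ℕ → Ω → ℝ)
    (σ2 : ℝ) (hσ2 : 0 < σ2)
    (hint1 : ∀ i a, Integrable (fun ω => errRow Θ ε i ω a) μ)
    (hmean : ∀ i a, ∫ ω, errRow Θ ε i ω a ∂μ = 0)
    (hint2 : ∀ i a b, Integrable (fun ω => errRow Θ ε i ω a * errRow Θ ε i ω b) μ)
    (hcov : ∀ i a b, ∫ ω, errRow Θ ε i ω a * errRow Θ ε i ω b ∂μ =
      if a = b then σ2 else 0)
    (hintV : ∀ n a, Integrable (fun ω => gramVec Z β Θ ε n ω a) μ)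
    (hintVV : ∀ n a b, Integrable (fun ω => gramVec Z β Θ ε n ω a * gramVec Z β Θ ε n ω b) μ)
    (t : Fin (p + 1) → ℝ) (ht : t ≠ 0) :
    (∀ n : ℕ,
      (∫ ω, (∑ i ∈ Finset.range n, rho Z β Θ ε σ2 t i ω) ^ 2 ∂μ) / n =
        t ⬝ᵥ ((n : ℝ)⁻¹ • covGram μ Z β Θ ε n).mulVec t) ∧
    (∀ B : Matrix (Fin (p + 1)) (Fin (p + 1)) ℝ, B.PosDef →
      Tendsto (fun n : ℕ => (n : ℝ)⁻¹ • covGram μ Z β Θ ε n) atTop (𝓝 B) →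
      Tendsto (fun n : ℕ => (∫ ω, (∑ i ∈ Finset.range n, rho Z β Θ ε σ2 t i ω) ^ 2 ∂μ) / n)
          atTop (𝓝 (t ⬝ᵥ B.mulVec t)) ∧
        0 < t ⬝ᵥ B.mulVec t) :=
  rho_variance_quadratic_form_general μ Z β Θ ε σ2 hint1 hmean hint2 hcov hintV hintVV t ht

end Stmt14
end
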